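/- In the uniform-reward ISG instance with 4 players and 3 services each defined below, no welfare-maximizing schedule is a pure Nash equilibrium. In particular, the schedule where each player i uses the identity ordering (t_{i,1}, t_{i,2}, t_{i,3}) achieves welfare 23, every pure Nash equilibrium schedule has welfare at most 22, and there exists a schedule with welfare at least 23. -/
import Mathlib

open scoped Classical
noncomputable section

/-- The (1-based) time slot at which service `v` is deployed. -/
def slot {k q : ℕ} (σ : Fin k → Equiv.Perm (Fin q)) (v : Fin k × Fin q) : ℕ :=
  (σ v.1 v.2 : ℕ) + 1

/-- Activation time of `v`: latest deployment among `v` and its in-neighbors. -/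
def act {k q : ℕ} (E : Fin k × Fin q → Fin k × Fin q → Prop)
    (σ : Fin k → Equiv.Perm (Fin q)) (v : Fin k × Fin q) : ℕ :=
  (insert v (Finset.univ.filter fun w => E w v)).sup (slot σ)

/-- Player `i`'s utility under uniform rewards. -/
def util {k q : ℕ} (E : Fin k × Fin q → Fin k × Fin q → Prop)
    (σ : Fin k → Equiv.Perm (Fin q)) (i : Fin k) : ℕ :=
  ∑ j : Fin q, (q + 1 - act E σ (i, j))

/-- Utilitarian social welfare. -/
def welfare {k q : ℕ} (E : Fin k × Fin q → Fin k × Fin q → Prop)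
    (σ : Fin k → Equiv.Perm (Fin q)) : ℕ :=
  ∑ i : Fin k, util E σ i

/-- Pure Nash equilibrium: no unilateral deviation improves a player's utility. -/
def PNE {k q : ℕ} (E : Fin k × Fin q → Fin k × Fin q → Prop)
    (σ : Fin k → Equiv.Perm (Fin q)) : Prop :=
  ∀ (i : Fin k) (τ : Equiv.Perm (Fin q)),
    util E (Function.update σ i τ) i ≤ util E σ i

/-- The base dependency edges of the 4-player, 3-service instance. -/
def base5 : Fin 4 × Fin 3 → Fin 4 × Fin 3 → Prop := fun v w =>
  (v, w) ∈ ([((0, 0), (0, 1)), ((0, 1), (1, 0)), ((0, 1), (1, 1)),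
             ((1, 0), (2, 1)), ((1, 0), (3, 1)), ((1, 1), (2, 1)),
             ((1, 1), (3, 1)), ((2, 1), (2, 2)), ((3, 1), (3, 2))] :
      List ((Fin 4 × Fin 3) × (Fin 4 × Fin 3)))

/-- The dependency relation: transitive closure of the base edges. -/
def E5 : Fin 4 × Fin 3 → Fin 4 × Fin 3 → Prop := Relation.TransGen base5


def clos5 : List ((Fin 4 × Fin 3) × (Fin 4 × Fin 3)) :=
  [((0,0),(0,1)), ((0,0),(1,0)), ((0,0),(1,1)), ((0,0),(2,1)), ((0,0),(3,1)),
   ((0,0),(2,2)), ((0,0),(3,2)),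
   ((0,1),(1,0)), ((0,1),(1,1)), ((0,1),(2,1)), ((0,1),(3,1)), ((0,1),(2,2)), ((0,1),(3,2)),
   ((1,0),(2,1)), ((1,0),(3,1)), ((1,0),(2,2)), ((1,0),(3,2)),
   ((1,1),(2,1)), ((1,1),(3,1)), ((1,1),(2,2)), ((1,1),(3,2)),
   ((2,1),(2,2)), ((3,1),(3,2))]

def C5 : Fin 4 × Fin 3 → Fin 4 × Fin 3 → Prop := fun v w => (v, w) ∈ clos5

instance base5.dec : DecidableRel base5 := fun v w => by unfold base5; infer_instance

instance C5.dec : DecidableRel C5 := fun v w => by unfold C5 clos5; infer_instance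

lemma hbase5 : ∀ v w, base5 v w → C5 v w := by decide

lemma hstep5 : ∀ a b c, C5 a b → base5 b c → C5 a c := by decide

lemma hback5 : ∀ p ∈ clos5, Relation.TransGen base5 p.1 p.2 := by
  have h1 : Relation.TransGen base5 (0,0) (0,1) := .single (by decide)
  have h2 : Relation.TransGen base5 (0,1) (1,0) := .single (by decide)
  have h3 : Relation.TransGen base5 (0,1) (1,1) := .single (by decide)
  have h4 : Relation.TransGen base5 (1,0) (2,1) := .single (by decide)
  have h5 : Relation.TransGen base5 (1,0) (3,1) := .single (by decide)
  have h6 : Relation.TransGen base5 (1,1) (2,1) := .single (by decide)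
  have h7 : Relation.TransGen base5 (1,1) (3,1) := .single (by decide)
  have h8 : Relation.TransGen base5 (2,1) (2,2) := .single (by decide)
  have h9 : Relation.TransGen base5 (3,1) (3,2) := .single (by decide)
  intro p hp
  fin_cases hp <;>
    first
      | exact h1 | exact h2 | exact h3 | exact h4 | exact h5 | exact h6 | exact h7
      | exact h8 | exact h9
      | exact h1.trans h2 | exact h1.trans h3
      | exact (h1.trans h2).trans h4 | exact (h1.trans h2).trans h5
      | exact ((h1.trans h2).trans h4).trans h8 | exact ((h1.trans h2).trans h5).trans h9
      | exact h2.trans h4 | exact h2.trans h5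
      | exact (h2.trans h4).trans h8 | exact (h2.trans h5).trans h9
      | exact h4.trans h8 | exact h5.trans h9
      | exact h6.trans h8 | exact h7.trans h9

lemma E5_eq : E5 = C5 := by
  funext v w
  apply propext
  constructor
  · intro h
    induction h with
    | single h => exact hbase5 _ _ h
    | tail _ h ih => exact hstep5 _ _ _ ih h
  · intro h
    exact hback5 (v, w) h

def actD (σ : Fin 4 → Equiv.Perm (Fin 3)) (v : Fin 4 × Fin 3) : ℕ :=
  (insert v (Finset.univ.filter fun w => decide (C5 w v))).sup (slot σ)

lemma act_eq (σ : Fin 4 → Equiv.Perm (Fin 3)) (v : Fin 4 × Fin 3) :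
    act C5 σ v = actD σ v := by
  unfold act actD
  congr 1
  congr 1
  ext w
  simp

def utilD (σ : Fin 4 → Equiv.Perm (Fin 3)) (i : Fin 4) : ℕ :=
  ∑ j : Fin 3, (4 - actD σ (i, j))

lemma util_eq (σ : Fin 4 → Equiv.Perm (Fin 3)) (i : Fin 4) : util C5 σ i = utilD σ i := by
  unfold util utilD
  simp [act_eq]

def welfareD (σ : Fin 4 → Equiv.Perm (Fin 3)) : ℕ := ∑ i : Fin 4, utilD σ i

lemma welfare_eq (σ : Fin 4 → Equiv.Perm (Fin 3)) : welfare C5 σ = welfareD σ := by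
  unfold welfare welfareD
  simp [util_eq]

set_option maxRecDepth 10000 in
lemma welfare_one5 : welfareD (fun _ => 1) = 23 := by decide

set_option maxRecDepth 100000 in
set_option maxHeartbeats 4000000 in
lemma key5' : ∀ a b c d : Equiv.Perm (Fin 3), 22 < welfareD ![a,b,c,d] →
    ∃ (i : Fin 4) (τ : Equiv.Perm (Fin 3)),
      utilD ![a,b,c,d] i < utilD (Function.update ![a,b,c,d] i τ) i := by decide

lemma key5 (σ : Fin 4 → Equiv.Perm (Fin 3)) : 22 < welfareD σ →
    ∃ (i : Fin 4) (τ : Equiv.Perm (Fin 3)),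
      utilD σ i < utilD (Function.update σ i τ) i := by
  have e : ![σ 0, σ 1, σ 2, σ 3] = σ := by
    funext i; fin_cases i <;> rfl
  rw [← e]
  exact key5' (σ 0) (σ 1) (σ 2) (σ 3)


theorem stmt_5 :
    welfare E5 (fun _ => 1) = 23 ∧
    (∀ σ : Fin 4 → Equiv.Perm (Fin 3), PNE E5 σ → welfare E5 σ ≤ 22) ∧
    (∃ σ : Fin 4 → Equiv.Perm (Fin 3), 23 ≤ welfare E5 σ) ∧
    (∀ σ : Fin 4 → Equiv.Perm (Fin 3),
      (∀ σ' : Fin 4 → Equiv.Perm (Fin 3), welfare E5 σ' ≤ welfare E5 σ) → ¬ PNE E5 σ) := by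
  rw [E5_eq]
  have hb2 : ∀ σ : Fin 4 → Equiv.Perm (Fin 3), PNE C5 σ → welfare C5 σ ≤ 22 := by
    intro σ hp
    by_contra h
    push_neg at h
    rw [welfare_eq] at h
    obtain ⟨i, τ, hlt⟩ := key5 σ h
    have hle := hp i τ
    rw [util_eq, util_eq] at hle
    omega
  refine ⟨by rw [welfare_eq]; exact welfare_one5, hb2, ⟨fun _ => 1, by rw [welfare_eq, welfare_one5]⟩, ?_⟩
  intro σ hmax hp
  have h1 := hmax (fun _ => 1)
  rw [welfare_eq (fun _ => 1), welfare_one5] at h1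
  have h2 := hb2 σ hp
  omega
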